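/- Let L be a nonempty finite index set and i ∈ L. Suppose for each j ∈ L we are given reals λ_j > 1 and x_j > φ(λ_j). Then exp(−x_i) · Π_{j ∈ L∖{i}} [ exp(−x_j) + (1 − exp(−x_j))·exp(−λ_j·h(x_j; λ_j)) ] = exp( −Σ_{j ∈ L} x_j + Σ_{j ∈ L∖{i}} φ(λ_j) ). -/

import Mathlib

open Finset

/-- `phi l = log (l / (l - 1))` for `l > 1`. -/
noncomputable def phi (l : ℝ) : ℝ := Real.log (l / (l - 1))

/-- `h x l = (1/l) * log ((l - 1) * (exp x - 1))`. -/
noncomputable def h (x l : ℝ) : ℝ := (1 / l) * Real.log ((l - 1) * (Real.exp x - 1))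

/-! Since `exp (-λ h(x; λ)) = 1 / ((λ - 1)(eˣ - 1))`, each factor of the product collapses to
`e⁻ˣ (1 + 1/(λ - 1)) = e⁻ˣ λ/(λ - 1) = exp (-x + φ(λ))`; the identity is then the product of
exponentials over `L`. -/

lemma exp_phi {l : ℝ} (hl : 1 < l) : Real.exp (phi l) = l / (l - 1) :=
  Real.exp_log (div_pos (by linarith) (by linarith))

lemma phi_pos {l : ℝ} (hl : 1 < l) : 0 < phi l :=
  Real.log_pos <| (one_lt_div (by linarith)).2 (by linarith)

lemma exp_neg_mul_h {l x : ℝ} (hl : 1 < l) (hx : 0 < x) :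
    Real.exp (-l * h x l) = ((l - 1) * (Real.exp x - 1))⁻¹ := by
  have harg : 0 < (l - 1) * (Real.exp x - 1) :=
    mul_pos (by linarith) (by linarith [Real.one_lt_exp_iff.2 hx])
  have hl0 : l ≠ 0 := by positivity
  rw [h, ← mul_assoc, neg_mul, mul_one_div_cancel hl0, neg_one_mul, Real.exp_neg,
    Real.exp_log harg]

lemma exp_neg_add_one_sub_mul_exp_neg_mul_h {l x : ℝ} (hl : 1 < l) (hx : 0 < x) :
    Real.exp (-x) + (1 - Real.exp (-x)) * Real.exp (-l * h x l) = Real.exp (-x + phi l) := by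
  have hl1 : l - 1 ≠ 0 := by linarith
  have hex : Real.exp x - 1 ≠ 0 := by linarith [Real.one_lt_exp_iff.2 hx]
  rw [exp_neg_mul_h hl hx, Real.exp_add, exp_phi hl, Real.exp_neg]
  field_simp
  ring

/-- probability-of-being-uninformed product identity inside an echo chamber. -/
theorem uninformed_prob_identity {ι : Type*} [DecidableEq ι] (L : Finset ι) (i : ι)
    (hi : i ∈ L) (lam x : ι → ℝ)
    (hlam : ∀ j ∈ L, 1 < lam j) (hx : ∀ j ∈ L, phi (lam j) < x j) :
    Real.exp (-x i) *
      ∏ j ∈ L.erase i,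
        (Real.exp (-x j) + (1 - Real.exp (-x j)) * Real.exp (-(lam j) * h (x j) (lam j)))
    = Real.exp (-∑ j ∈ L, x j + ∑ j ∈ L.erase i, phi (lam j)) := by
  have hfactor : ∀ j ∈ L.erase i,
      Real.exp (-x j) + (1 - Real.exp (-x j)) * Real.exp (-(lam j) * h (x j) (lam j))
        = Real.exp (-x j + phi (lam j)) := fun j hj ↦ by
    have hjL := mem_of_mem_erase hj
    exact exp_neg_add_one_sub_mul_exp_neg_mul_h (hlam j hjL)
      ((phi_pos (hlam j hjL)).trans (hx j hjL))
  rw [prod_congr rfl hfactor, ← Real.exp_sum, ← Real.exp_add, ← add_sum_erase L x hi,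
    sum_add_distrib, sum_neg_distrib]
  ring_nf
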